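/- Let g be as above and g'(ξ) its derivative. Then g'(ξ) = 2^{1/3}/(3 ξ^{2/3}) (1 + o(1)) as ξ → 0⁺, and g'(ξ) = 8/(3⁵ ξ²) + o(1/ξ²) as ξ → +∞. -/

import Mathlib

/-!
For `ξ > 0`, Cardano's formula exhibits `h(ξ)` as a positive root of `h³ + 3ξh - 2ξ = 0`;
hence `0 < h < 2/3`, and implicit differentiation gives `h' = (2 - 3h)/(3(h² + ξ))`, so
`g' = (2 - 3h)(1 - h)/(3(h² + ξ))`. As `ξ → 0⁺` the cubic forces `h → 0` and
`(h/ξ^{1/3})³ = 2 - 3h → 2`, whence `g' ξ^{2/3} → 2/(3·2^{2/3}) = 2^{1/3}/3`.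
As `ξ → ∞`, `h = 2/(h²/ξ + 3) → 2/3` and `ξ(2 - 3h) = h³ → 8/27`, whence `g' ξ² → 8/3⁵`.
-/

open Real Filter Asymptotics

/-- Real cube root: `cbrt x = sign(x) |x|^{1/3}`. -/
noncomputable def cbrt (x : ℝ) : ℝ := Real.sign x * |x| ^ ((1 : ℝ)/3)

/-- `h(ξ) = ξ^{1/3}((1+√(1+ξ))^{1/3} + (1-√(1+ξ))^{1/3})` with real cube roots. -/
noncomputable def hFun (ξ : ℝ) : ℝ :=
  cbrt ξ * (cbrt (1 + Real.sqrt (1 + ξ)) + cbrt (1 - Real.sqrt (1 + ξ)))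

/-- `g(ξ) = h(ξ)(1 - h(ξ)/2)`. -/
noncomputable def gFun (ξ : ℝ) : ℝ := hFun ξ * (1 - hFun ξ / 2)

open Topology

lemma rpow_one_third_pow_three {x : ℝ} (hx : 0 ≤ x) : (x ^ ((1 : ℝ) / 3)) ^ 3 = x := by
  simpa using Real.rpow_inv_natCast_pow hx three_ne_zero

lemma one_lt_sqrt_one_add {ξ : ℝ} (hξ : 0 < ξ) : 1 < √(1 + ξ) :=
  (Real.lt_sqrt zero_le_one).2 (by linarith)

lemma sqrt_one_add_add_one_mul_sub_one {ξ : ℝ} (hξ : -1 ≤ ξ) :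
    (√(1 + ξ) + 1) * (√(1 + ξ) - 1) = ξ := by
  nlinarith [Real.sq_sqrt (show 0 ≤ 1 + ξ by linarith)]

lemma Filter.Tendsto.of_pow_of_nonneg {α : Type*} {l : Filter α} {f : α → ℝ} {a : ℝ} {n : ℕ}
    (h : Tendsto (fun x => f x ^ n) l (𝓝 a)) (hn : n ≠ 0) (hf : ∀ᶠ x in l, 0 ≤ f x) :
    Tendsto f l (𝓝 (a ^ (n⁻¹ : ℝ))) :=
  (h.rpow_const (Or.inr (by positivity))).congr' <|
    hf.mono fun _ hx => Real.pow_rpow_inv_natCast hx hn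

lemma Asymptotics.isEquivalent_div_of_tendsto_mul {α : Type*} {l : Filter α} {f w : α → ℝ}
    {c : ℝ} (hc : c ≠ 0) (hw : ∀ᶠ x in l, w x ≠ 0) (h : Tendsto (fun x => f x * w x) l (𝓝 c)) :
    f ~[l] fun x => c / w x := by
  refine isEquivalent_of_tendsto_one ?_
  have h' : Tendsto (fun x => f x * w x / c) l (𝓝 1) := by simpa [hc] using h.div_const c
  refine h'.congr' (hw.mono fun x hx => ?_)
  simp only [Pi.div_apply]
  field_simp

lemma cbrt_of_pos {x : ℝ} (hx : 0 < x) : cbrt x = x ^ ((1 : ℝ) / 3) := by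
  rw [cbrt, Real.sign_of_pos hx, abs_of_pos hx, one_mul]

lemma cbrt_of_neg {x : ℝ} (hx : x < 0) : cbrt x = -(-x) ^ ((1 : ℝ) / 3) := by
  rw [cbrt, Real.sign_of_neg hx, abs_of_neg hx, neg_one_mul]

lemma hFun_eq_of_pos {ξ : ℝ} (hξ : 0 < ξ) :
    hFun ξ = (√(1 + ξ) + 1) ^ ((1 : ℝ) / 3) * (√(1 + ξ) - 1) ^ ((1 : ℝ) / 3) *
      ((√(1 + ξ) + 1) ^ ((1 : ℝ) / 3) - (√(1 + ξ) - 1) ^ ((1 : ℝ) / 3)) := by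
  have hs := one_lt_sqrt_one_add hξ
  rw [hFun, cbrt_of_pos hξ, cbrt_of_pos (by linarith), cbrt_of_neg (by linarith), neg_sub,
    ← Real.mul_rpow (by linarith) (by linarith), sqrt_one_add_add_one_mul_sub_one (by linarith),
    add_comm 1 (√(1 + ξ))]
  ring

lemma hFun_pos {ξ : ℝ} (hξ : 0 < ξ) : 0 < hFun ξ := by
  have hs := one_lt_sqrt_one_add hξ
  rw [hFun_eq_of_pos hξ]
  have hlt : (√(1 + ξ) - 1) ^ ((1 : ℝ) / 3) < (√(1 + ξ) + 1) ^ ((1 : ℝ) / 3) :=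
    Real.rpow_lt_rpow (by linarith) (by linarith) (by norm_num)
  have hB : 0 < (√(1 + ξ) - 1) ^ ((1 : ℝ) / 3) := Real.rpow_pos_of_pos (by linarith) _
  have hA : 0 < (√(1 + ξ) + 1) ^ ((1 : ℝ) / 3) := Real.rpow_pos_of_pos (by linarith) _
  exact mul_pos (mul_pos hA hB) (sub_pos.2 hlt)

lemma hFun_pow_three {ξ : ℝ} (hξ : 0 < ξ) : hFun ξ ^ 3 = ξ * (2 - 3 * hFun ξ) := by
  have hs := one_lt_sqrt_one_add hξ
  have hA := rpow_one_third_pow_three (show 0 ≤ √(1 + ξ) + 1 by linarith)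
  have hB := rpow_one_third_pow_three (show 0 ≤ √(1 + ξ) - 1 by linarith)
  rw [hFun_eq_of_pos hξ]
  set A := (√(1 + ξ) + 1) ^ ((1 : ℝ) / 3)
  set B := (√(1 + ξ) - 1) ^ ((1 : ℝ) / 3)
  have hdiff : A ^ 3 - B ^ 3 = 2 := by rw [hA, hB]; ring
  have hprod : (A * B) ^ 3 = ξ := by
    rw [mul_pow, hA, hB, sqrt_one_add_add_one_mul_sub_one (by linarith)]
  linear_combination (A * B) ^ 3 * hdiff + (2 - 3 * (A * B * (A - B))) * hprod

lemma hFun_lt_two_thirds {ξ : ℝ} (hξ : 0 < ξ) : hFun ξ < 2 / 3 := by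
  have := hFun_pow_three hξ
  have := pow_pos (hFun_pos hξ) 3
  nlinarith

lemma differentiableAt_hFun {ξ : ℝ} (hξ : 0 < ξ) : DifferentiableAt ℝ hFun ξ := by
  have hs := one_lt_sqrt_one_add hξ
  have hev : hFun =ᶠ[𝓝 ξ] fun t => (√(1 + t) + 1) ^ ((1 : ℝ) / 3) * (√(1 + t) - 1) ^ ((1 : ℝ) / 3) *
      ((√(1 + t) + 1) ^ ((1 : ℝ) / 3) - (√(1 + t) - 1) ^ ((1 : ℝ) / 3)) :=
    (eventually_gt_nhds hξ).mono fun t ht => hFun_eq_of_pos ht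
  rw [hev.differentiableAt_iff]
  have : 1 + ξ ≠ 0 := by linarith
  have : √(1 + ξ) + 1 ≠ 0 := by linarith
  have : √(1 + ξ) - 1 ≠ 0 := by linarith
  fun_prop (disch := assumption)

lemma hasDerivAt_hFun {ξ : ℝ} (hξ : 0 < ξ) :
    HasDerivAt hFun ((2 - 3 * hFun ξ) / (3 * (hFun ξ ^ 2 + ξ))) ξ := by
  have hD := (differentiableAt_hFun hξ).hasDerivAt
  set D := deriv hFun ξ
  have hcubic : HasDerivAt (fun t => hFun t ^ 3 + 3 * t * hFun t - 2 * t)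
      (3 * hFun ξ ^ 2 * D + (3 * hFun ξ + 3 * ξ * D) - 2) ξ := by
    refine (((hD.pow 3).add (((hasDerivAt_id' ξ).const_mul 3).mul hD)).sub
      ((hasDerivAt_id' ξ).const_mul 2)).congr_deriv ?_
    push_cast
    ring
  have hzero : HasDerivAt (fun t => hFun t ^ 3 + 3 * t * hFun t - 2 * t) 0 ξ :=
    (hasDerivAt_const ξ 0).congr_of_eventuallyEq <|
      (eventually_gt_nhds hξ).mono fun t ht => by linear_combination hFun_pow_three ht
  have hD_eq : D * (3 * (hFun ξ ^ 2 + ξ)) = 2 - 3 * hFun ξ := by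
    linear_combination hcubic.unique hzero
  rwa [eq_div_of_mul_eq (by positivity [hFun_pos hξ]) hD_eq] at hD

lemma deriv_gFun {ξ : ℝ} (hξ : 0 < ξ) :
    deriv gFun ξ = (2 - 3 * hFun ξ) * (1 - hFun ξ) / (3 * (hFun ξ ^ 2 + ξ)) := by
  have hD := hasDerivAt_hFun hξ
  have hG : HasDerivAt gFun _ ξ := hD.mul ((hD.div_const 2).const_sub 1)
  rw [hG.deriv]
  ring

lemma tendsto_hFun_nhdsGT_zero : Tendsto hFun (𝓝[>] 0) (𝓝 0) := by
  have hcube : Tendsto (fun ξ => hFun ξ ^ 3) (𝓝[>] 0) (𝓝 0) := by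
    have h2ξ : Tendsto (fun ξ : ℝ => 2 * ξ) (𝓝[>] 0) (𝓝 0) := by
      simpa using ((continuous_const_mul (2 : ℝ)).tendsto 0).mono_left nhdsWithin_le_nhds
    refine tendsto_of_tendsto_of_tendsto_of_le_of_le' tendsto_const_nhds h2ξ ?_ ?_ <;>
      filter_upwards [self_mem_nhdsWithin] with ξ hξ
    · exact (pow_pos (hFun_pos hξ) 3).le
    · nlinarith [hFun_pow_three hξ, hFun_pos hξ, mul_pos hξ (hFun_pos hξ)]
  have h := hcube.of_pow_of_nonneg three_ne_zero
    (eventually_mem_nhdsWithin.mono fun ξ hξ => (hFun_pos hξ).le)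
  rwa [Real.zero_rpow (by norm_num)] at h

lemma tendsto_hFun_div_rpow_nhdsGT_zero :
    Tendsto (fun ξ => hFun ξ / ξ ^ ((1 : ℝ) / 3)) (𝓝[>] 0) (𝓝 ((2 : ℝ) ^ ((1 : ℝ) / 3))) := by
  have hcube : Tendsto (fun ξ => (hFun ξ / ξ ^ ((1 : ℝ) / 3)) ^ 3) (𝓝[>] 0) (𝓝 2) := by
    have h := (tendsto_hFun_nhdsGT_zero.const_mul 3).const_sub 2
    rw [mul_zero, sub_zero] at h
    refine h.congr' <| eventually_mem_nhdsWithin.mono fun ξ (hξ : 0 < ξ) => ?_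
    dsimp only
    rw [div_pow, rpow_one_third_pow_three hξ.le, hFun_pow_three hξ]
    field_simp
  have h := hcube.of_pow_of_nonneg three_ne_zero <|
    eventually_mem_nhdsWithin.mono fun ξ hξ => (div_pos (hFun_pos hξ) (Real.rpow_pos_of_pos hξ _)).le
  convert h using 3
  norm_num

lemma tendsto_deriv_gFun_mul_rpow_nhdsGT_zero :
    Tendsto (fun ξ => deriv gFun ξ * ξ ^ ((2 : ℝ) / 3)) (𝓝[>] 0)
      (𝓝 ((2 : ℝ) ^ ((1 : ℝ) / 3) / 3)) := by
  set c := (2 : ℝ) ^ ((1 : ℝ) / 3)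
  have hc : 0 < c := by positivity
  have hq_lim : Tendsto (fun ξ : ℝ => ξ ^ ((1 : ℝ) / 3)) (𝓝[>] 0) (𝓝 0) := by
    simpa [Real.zero_rpow] using
      (Real.continuousAt_rpow_const 0 ((1 : ℝ) / 3) (by norm_num)).tendsto.mono_left
        nhdsWithin_le_nhds
  have h := (((tendsto_hFun_nhdsGT_zero.const_mul 3).const_sub 2).mul
    (tendsto_hFun_nhdsGT_zero.const_sub 1)).div
    (((tendsto_hFun_div_rpow_nhdsGT_zero.pow 2).add hq_lim).const_mul 3) (by positivity)
  have hlim : (2 - 3 * 0) * (1 - 0) / (3 * (c ^ 2 + 0)) = c / 3 := by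
    field_simp
    linear_combination -rpow_one_third_pow_three zero_le_two
  rw [hlim] at h
  refine h.congr' <| eventually_mem_nhdsWithin.mono fun ξ (hξ : 0 < ξ) => ?_
  simp only [Pi.div_apply]
  set q := ξ ^ ((1 : ℝ) / 3)
  have hq : 0 < q := by positivity
  have hξq : ξ = q ^ 3 := (rpow_one_third_pow_three hξ.le).symm
  have hξ23 : ξ ^ ((2 : ℝ) / 3) = q ^ 2 := by
    rw [← Real.rpow_natCast, ← Real.rpow_mul hξ.le]
    norm_num
  have hsum : hFun ξ ^ 2 + ξ = q ^ 2 * ((hFun ξ / q) ^ 2 + q) := by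
    field_simp
    linear_combination hξq
  rw [deriv_gFun hξ, hξ23, hsum]
  field_simp

lemma tendsto_hFun_sq_div_atTop : Tendsto (fun ξ => hFun ξ ^ 2 / ξ) atTop (𝓝 0) := by
  refine tendsto_of_tendsto_of_tendsto_of_le_of_le' tendsto_const_nhds tendsto_inv_atTop_zero
    ?_ ?_ <;> filter_upwards [eventually_gt_atTop 0] with ξ hξ
  · have := hFun_pos hξ
    positivity
  · rw [div_le_iff₀ hξ, inv_mul_cancel₀ hξ.ne']
    nlinarith [hFun_pos hξ, hFun_lt_two_thirds hξ]

lemma tendsto_hFun_atTop : Tendsto hFun atTop (𝓝 (2 / 3)) := by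
  have h := tendsto_const_nhds (x := (2 : ℝ)).div (tendsto_hFun_sq_div_atTop.add_const 3)
    (by norm_num)
  rw [zero_add] at h
  refine h.congr' <| (eventually_gt_atTop 0).mono fun ξ hξ => ?_
  have := hFun_pos hξ
  dsimp only [Pi.div_apply]
  field_simp
  linear_combination -hFun_pow_three hξ

lemma tendsto_deriv_gFun_mul_sq_atTop :
    Tendsto (fun ξ => deriv gFun ξ * ξ ^ 2) atTop (𝓝 (8 / 3 ^ 5)) := by
  have h := (((tendsto_hFun_atTop.pow 3).mul (tendsto_hFun_atTop.const_sub 1)).div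
    (tendsto_hFun_sq_div_atTop.add_const 1) (by norm_num)).div_const 3
  norm_num at h
  rw [show (8 : ℝ) / 3 ^ 5 = 8 / 243 by norm_num]
  refine h.congr' <| (eventually_gt_atTop 0).mono fun ξ hξ => ?_
  dsimp only
  rw [deriv_gFun hξ, hFun_pow_three hξ]
  field_simp

/-- asymptotics of `g'`:
`g'(ξ) = 2^{1/3}/(3 ξ^{2/3})(1 + o(1))` as `ξ → 0⁺`, and
`g'(ξ) = 8/(3⁵ ξ²) + o(1/ξ²)` as `ξ → +∞`. -/
theorem stmt_6 (g' : ℝ → ℝ) (hg' : ∀ ξ : ℝ, 0 < ξ → HasDerivAt gFun (g' ξ) ξ) :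
    ((fun ξ : ℝ => g' ξ - (2 : ℝ) ^ ((1 : ℝ)/3) / (3 * ξ ^ ((2 : ℝ)/3)))
        =o[nhdsWithin 0 (Set.Ioi 0)]
      (fun ξ : ℝ => (2 : ℝ) ^ ((1 : ℝ)/3) / (3 * ξ ^ ((2 : ℝ)/3))))
    ∧ ((fun ξ : ℝ => g' ξ - 8 / (3 ^ 5 * ξ ^ 2)) =o[atTop] (fun ξ : ℝ => 1 / ξ ^ 2)) := by
  have hg'_eq : ∀ ξ : ℝ, 0 < ξ → deriv gFun ξ = g' ξ := fun ξ hξ => (hg' ξ hξ).deriv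
  constructor
  · have h := isEquivalent_div_of_tendsto_mul (by positivity)
      (eventually_mem_nhdsWithin.mono fun ξ (hξ : 0 < ξ) => by positivity)
      tendsto_deriv_gFun_mul_rpow_nhdsGT_zero
    simp only [div_div] at h
    exact (h.congr_left (eventually_mem_nhdsWithin.mono hg'_eq)).isLittleO
  · have h := isEquivalent_div_of_tendsto_mul (by positivity)
      ((eventually_gt_atTop 0).mono fun ξ (hξ : 0 < ξ) => by positivity)
      tendsto_deriv_gFun_mul_sq_atTop
    simp only [div_div] at h
    exact (h.congr_left ((eventually_gt_atTop 0).mono hg'_eq)).isLittleO.trans_isBigO <|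
      (isBigO_const_mul_self (8 / 3 ^ 5) _ _).congr_left fun ξ => by ring
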